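/- Let F be a field, k ≥ 2, α_{k−1} ∈ F nonzero, D_k ∈ F^{m×m}, v ∈ F^k, H ∈ F^{km×(k−1)m}, and X, Y ∈ F^{n×n}. Assume X, Y and K_0 := [v⊗I_m, H] ∈ F^{km×km} are invertible. Set L_1 := [α_{k−1}^{−1}(v⊗D_k), H] ∈ F^{km×km} (equivalently L_1 = K_0·diag(α_{k−1}^{−1}D_k, I_{(k−1)m})) and 𝓛_1 := [[XY, 0],[0, L_1]] ∈ F^{(n+km)×(n+km)}. Then: (1) every (w;x) with 𝓛_1·(w;x) = 0 has w = 0; (2) for every x_0 ∈ F^m, D_k x_0 = 0 if and only if 𝓛_1·(0; e_1⊗x_0) = 0, where e_1 is the first canonical vector of F^k; (3) the map x_0 ↦ (0; e_1⊗x_0) is a linear isomorphism from ker D_k onto ker 𝓛_1; in particular x_1, …, x_q is a basis of ker D_k if and only if (0; e_1⊗x_1), …, (0; e_1⊗x_q) is a basis of ker 𝓛_1. -/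

import Mathlib

open Matrix

/-- The matrix `v ⊗ I_m ∈ R^{km×m}` built from a vector `v ∈ R^k`. -/
def vKron {R : Type*} [Semiring R] (k m : ℕ) (v : Fin k → R) :
    Matrix (Fin k × Fin m) (Fin m) R :=
  Matrix.of fun p j => if p.2 = j then v p.1 else 0

/-- The constant `km × km` matrix `[v ⊗ I_m, H]`. -/
def concatKron {F : Type*} [Field F] (k m : ℕ) (v : Fin k → F)
    (H : Matrix (Fin k × Fin m) (Fin (k - 1) × Fin m) F) :
    Matrix (Fin k × Fin m) (Fin k × Fin m) F :=
  Matrix.of fun p q =>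
    if h : (q.1 : ℕ) = 0 then (if p.2 = q.2 then v p.1 else 0)
    else H p (⟨(q.1 : ℕ) - 1, by have := q.1.isLt; omega⟩, q.2)

/-! Since `XY` is invertible, `ker 𝓛₁ = 0 ⊕ ker L₁`. The block-column factorization
`L₁ = K₀ · diag(a⁻¹ D_k, I, …, I)` with `K₀` invertible gives
`ker L₁ = ker diag(a⁻¹ D_k, I, …, I) = e₁ ⊗ ker D_k`. So `ker 𝓛₁` is the image of
`ker D_k` under the injective linear map `x₀ ↦ (0; e₁ ⊗ x₀)`, from which all four claims
follow. -/

namespace Matrix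

section BlockDiagonalFst

variable {R : Type*} [CommRing R] {l m o : Type*} [DecidableEq o]

/-- `blockDiagonal d` with the block index moved to the first component, the ordering of the
Kronecker product `e_i ⊗ x`. -/
def blockDiagonalFst (d : o → Matrix m m R) : Matrix (o × m) (o × m) R :=
  (blockDiagonal d).submatrix Prod.swap Prod.swap

theorem blockDiagonalFst_apply (d : o → Matrix m m R) (p q : o × m) :
    blockDiagonalFst d p q = if p.1 = q.1 then d p.1 p.2 q.2 else 0 := by
  simp [blockDiagonalFst, blockDiagonal_apply]

variable [Fintype m] [Fintype o]

theorem blockDiagonalFst_mulVec_apply (d : o → Matrix m m R) (x : o × m → R) (p : o × m) :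
    (blockDiagonalFst d *ᵥ x) p = (d p.1 *ᵥ fun j => x (p.1, j)) p.2 := by
  simp [mulVec, dotProduct, blockDiagonalFst_apply, Fintype.sum_prod_type, ite_mul]

theorem blockDiagonalFst_mulVec_eq_zero_iff (d : o → Matrix m m R) (x : o × m → R) :
    blockDiagonalFst d *ᵥ x = 0 ↔ ∀ i, (d i *ᵥ fun j => x (i, j)) = 0 := by
  simp only [funext_iff, Prod.forall, blockDiagonalFst_mulVec_apply, Pi.zero_apply]

theorem mul_blockDiagonalFst_apply (M : Matrix l (o × m) R) (d : o → Matrix m m R) (p : l)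
    (q : o × m) : (M * blockDiagonalFst d) p q = ∑ j, M p (q.1, j) * d q.1 j q.2 := by
  simp [mul_apply, blockDiagonalFst_apply, Fintype.sum_prod_type, mul_ite]

end BlockDiagonalFst

section Kernels

variable {R : Type*} [CommRing R] {l m n : Type*} [Fintype l] [Fintype n]

theorem ker_mulVecLin_mul_of_isUnit_det [Fintype m] [DecidableEq m] {K : Matrix m m R}
    (hK : IsUnit K.det) (N : Matrix m n R) :
    LinearMap.ker (K * N).mulVecLin = LinearMap.ker N.mulVecLin := by
  rw [mulVecLin_mul, LinearMap.ker_comp_of_ker_eq_bot]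
  exact LinearMap.ker_eq_bot.2 (mulVec_injective_of_isUnit ((isUnit_iff_isUnit_det K).2 hK))

theorem ker_mulVecLin_fromBlocks_zero_zero [DecidableEq l] {A : Matrix l l R}
    (hA : IsUnit A.det) (D : Matrix m n R) :
    LinearMap.ker (fromBlocks A 0 0 D).mulVecLin =
      (LinearMap.ker D.mulVecLin).map (Sum.elimZeroLeft (κ := l)) := by
  ext y
  simp only [LinearMap.mem_ker, mulVecLin_apply, Submodule.mem_map]
  constructor
  · intro h
    simp only [fromBlocks_mulVec, zero_mulVec, add_zero, zero_add, funext_iff, Sum.forall,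
      Sum.elim_inl, Sum.elim_inr, Pi.zero_apply] at h
    have hl : y ∘ Sum.inl = 0 := mulVec_injective_of_isUnit
      ((isUnit_iff_isUnit_det A).2 hA) (by simpa [funext_iff] using h.1)
    refine ⟨y ∘ Sum.inr, funext h.2, ?_⟩
    ext (i | i)
    · exact (congrFun hl i).symm
    · rfl
  · rintro ⟨x, hx, rfl⟩
    change fromBlocks A 0 0 D *ᵥ Sum.elim 0 x = 0
    simp [fromBlocks_mulVec, hx]

theorem ker_mulVecLin_smul {K : Type*} [Field K] {c : K} (hc : c ≠ 0) (M : Matrix m n K) :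
    LinearMap.ker (c • M).mulVecLin = LinearMap.ker M.mulVecLin := by
  rw [show (c • M).mulVecLin = c • M.mulVecLin from
    LinearMap.ext fun x => smul_mulVec c M x, LinearMap.ker_smul _ _ hc]

end Kernels

end Matrix

section FirstBlock

variable {R : Type*} [CommRing R] {m : Type*} (k : ℕ)

def e₁Kron : (m → R) →ₗ[R] (Fin k × m → R) where
  toFun x p := if (p.1 : ℕ) = 0 then x p.2 else 0
  map_add' x y := by ext p; by_cases h : (p.1 : ℕ) = 0 <;> simp [h]
  map_smul' c x := by ext p; by_cases h : (p.1 : ℕ) = 0 <;> simp [h]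

variable {k} [NeZero k]

theorem e₁Kron_injective : Function.Injective (e₁Kron k : (m → R) →ₗ[R] _) :=
  fun x y h => funext fun j => by simpa [e₁Kron] using congrFun h (0, j)

theorem ker_mulVecLin_blockDiagonalFst_ite_one [Fintype m] [DecidableEq m] (B : Matrix m m R) :
    LinearMap.ker
        (Matrix.blockDiagonalFst fun i : Fin k => if (i : ℕ) = 0 then B else 1).mulVecLin =
      (LinearMap.ker B.mulVecLin).map (e₁Kron k) := by
  ext x
  simp only [LinearMap.mem_ker, Matrix.mulVecLin_apply, Submodule.mem_map,
    Matrix.blockDiagonalFst_mulVec_eq_zero_iff]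
  constructor
  · intro h
    refine ⟨fun j => x (0, j), by simpa using h 0, ?_⟩
    ext ⟨i, j⟩
    by_cases hi : i = 0
    · simp [e₁Kron, hi]
    · simpa [e₁Kron, hi, eq_comm] using congrFun (h i) j
  · rintro ⟨x₀, hx₀, rfl⟩ i
    by_cases hi : i = 0 <;> simp [e₁Kron, hi, hx₀, Pi.zero_def]

end FirstBlock

theorem concatKron_mul_blockDiagonalFst {F : Type*} [Field F] {k m : ℕ}
    (v : Fin k → F) (H : Matrix (Fin k × Fin m) (Fin (k - 1) × Fin m) F)
    (B : Matrix (Fin m) (Fin m) F) :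
    concatKron k m v H * Matrix.blockDiagonalFst (fun i : Fin k => if (i : ℕ) = 0 then B else 1) =
      Matrix.of fun p q =>
        if _ : (q.1 : ℕ) = 0 then v p.1 * B p.2 q.2
        else H p (⟨(q.1 : ℕ) - 1, by have := q.1.isLt; omega⟩, q.2) := by
  ext p q
  rw [Matrix.mul_blockDiagonalFst_apply]
  by_cases hq : (q.1 : ℕ) = 0
  · simp [concatKron, hq]
  · simp [concatKron, hq, Matrix.one_apply]

theorem linearIndependent_and_span_eq_map_iff {R M N ι : Type*} [Ring R] [AddCommGroup M]
    [Module R M] [AddCommGroup N] [Module R N] {f : M →ₗ[R] N} (hf : Function.Injective f)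
    (P : Submodule R M) (u : ι → M) :
    (LinearIndependent R u ∧ Submodule.span R (Set.range u) = P) ↔
      (LinearIndependent R (f ∘ u) ∧ Submodule.span R (Set.range (f ∘ u)) = P.map f) := by
  rw [LinearMap.linearIndependent_iff f (LinearMap.ker_eq_bot.2 hf), Set.range_comp,
    ← Submodule.map_span, (Submodule.map_injective_of_injective hf).eq_iff]
/-- Recovery of the eigenvectors associated to the infinite eigenvalue
from the leading coefficient `𝓛₁ = [[XY, 0], [0, L₁]]`, `L₁ = [α_{k-1}⁻¹(v⊗D_k), H]`,
of an `𝕄₁`-strong linearization: `ker 𝓛₁` corresponds to `ker D_k` via `x₀ ↦ (0; e₁⊗x₀)`. -/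
theorem recovery_infinite_eigenvectors_M1
    {F : Type*} [Field F] {m n k : ℕ} (hk : 2 ≤ k)
    (a : F) (ha : a ≠ 0)
    (Dk : Matrix (Fin m) (Fin m) F)
    (v : Fin k → F) (H : Matrix (Fin k × Fin m) (Fin (k - 1) × Fin m) F)
    (X Y : Matrix (Fin n) (Fin n) F)
    (hX : IsUnit X.det) (hY : IsUnit Y.det)
    (hK0 : IsUnit (concatKron k m v H).det)
    (L₁ : Matrix (Fin k × Fin m) (Fin k × Fin m) F)
    (hL₁ : L₁ = Matrix.of fun p q =>
      if h : (q.1 : ℕ) = 0 then a⁻¹ * v p.1 * Dk p.2 q.2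
      else H p (⟨(q.1 : ℕ) - 1, by have := q.1.isLt; omega⟩, q.2))
    (𝓛₁ : Matrix (Fin n ⊕ (Fin k × Fin m)) (Fin n ⊕ (Fin k × Fin m)) F)
    (h𝓛₁ : 𝓛₁ = Matrix.fromBlocks (X * Y) 0 0 L₁) :
    (∀ (w : Fin n → F) (x : Fin k × Fin m → F),
      𝓛₁ *ᵥ Sum.elim w x = 0 → w = 0) ∧
    (∀ x₀ : Fin m → F,
      Dk *ᵥ x₀ = 0 ↔
        𝓛₁ *ᵥ Sum.elim (0 : Fin n → F)
          (fun p : Fin k × Fin m => if (p.1 : ℕ) = 0 then x₀ p.2 else 0) = 0) ∧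
    (∃ e : LinearMap.ker Dk.mulVecLin ≃ₗ[F] LinearMap.ker 𝓛₁.mulVecLin,
      ∀ x₀ : LinearMap.ker Dk.mulVecLin,
        (e x₀ : Fin n ⊕ (Fin k × Fin m) → F)
          = Sum.elim (0 : Fin n → F)
              (fun p : Fin k × Fin m =>
                if (p.1 : ℕ) = 0 then (x₀ : Fin m → F) p.2 else 0)) ∧
    (∀ (q : ℕ) (u : Fin q → (Fin m → F)),
      (LinearIndependent F u ∧
          Submodule.span F (Set.range u) = LinearMap.ker Dk.mulVecLin) ↔
      (LinearIndependent F (fun i => Sum.elim (0 : Fin n → F)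
            (fun p : Fin k × Fin m => if (p.1 : ℕ) = 0 then u i p.2 else 0)) ∧
        Submodule.span F (Set.range (fun i => Sum.elim (0 : Fin n → F)
            (fun p : Fin k × Fin m => if (p.1 : ℕ) = 0 then u i p.2 else 0)))
          = LinearMap.ker 𝓛₁.mulVecLin)) := by
  have : NeZero k := ⟨by omega⟩
  let φ : (Fin m → F) →ₗ[F] (Fin n ⊕ (Fin k × Fin m) → F) :=
    Sum.elimZeroLeft ∘ₗ e₁Kron k
  have hφ : Function.Injective φ := Sum.elim_injective'.comp e₁Kron_injective
  have hL₁' : L₁ = concatKron k m v H *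
      Matrix.blockDiagonalFst (fun i : Fin k => if (i : ℕ) = 0 then a⁻¹ • Dk else 1) := by
    rw [hL₁, concatKron_mul_blockDiagonalFst]
    ext p q
    simp only [Matrix.of_apply, Matrix.smul_apply, smul_eq_mul]
    split_ifs <;> ring
  have hker : LinearMap.ker 𝓛₁.mulVecLin = (LinearMap.ker Dk.mulVecLin).map φ := by
    rw [h𝓛₁, Matrix.ker_mulVecLin_fromBlocks_zero_zero (by simpa using hX.mul hY), hL₁',
      Matrix.ker_mulVecLin_mul_of_isUnit_det hK0, ker_mulVecLin_blockDiagonalFst_ite_one,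
      Matrix.ker_mulVecLin_smul (inv_ne_zero ha), Submodule.map_comp]
  refine ⟨fun w x h => ?_, fun x₀ => ?_, ?_, fun q u => hker ▸
    linearIndependent_and_span_eq_map_iff hφ _ u⟩
  · obtain ⟨x₀, -, hx₀⟩ := hker ▸ LinearMap.mem_ker.2 h
    exact funext fun i => (congrFun hx₀ (Sum.inl i)).symm
  · exact (SetLike.ext_iff.1 (hker ▸ Submodule.comap_map_eq_of_injective hφ _) x₀).symm
  · exact ⟨Submodule.equivMapOfInjective φ hφ _ ≪≫ₗ LinearEquiv.ofEq _ _ hker.symm,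
      fun _ => rfl⟩
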